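/- arXiv:2111.15323 — 5 statements merged into one kernel-verified Lean document; each statement's English description precedes it below -/
import Mathlib

section
/- Let λ be a real number and μ a complex number with |μ| ≥ 1, and set s = λ·Re(μ)/|μ|². Then for all integers p and q, |p·s + q| ≤ |p·λ + q·μ|, where the right-hand side is the complex absolute value. -/
/-! `p·s + q` is the coordinate of `p·λ + q·μ` along `μ`, i.e. `⟪μ, p·λ + q·μ⟫ / ‖μ‖²`.
By Cauchy–Schwarz its absolute value is at most `‖p·λ + q·μ‖ / ‖μ‖`, and `‖μ‖ ≥ 1`. -/

open scoped RealInnerProductSpace ComplexConjugate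

theorem abs_real_inner_div_norm_sq_le {F : Type*} [NormedAddCommGroup F] [InnerProductSpace ℝ F]
    (x y : F) : |⟪x, y⟫ / ‖x‖ ^ 2| ≤ ‖y‖ / ‖x‖ := by
  rcases eq_or_ne x 0 with rfl | hx₀
  · simp
  have hx : 0 < ‖x‖ := norm_pos_iff.2 hx₀
  rw [abs_div, abs_of_nonneg (sq_nonneg ‖x‖), div_le_div_iff₀ (by positivity) hx]
  calc |⟪x, y⟫| * ‖x‖ ≤ ‖x‖ * ‖y‖ * ‖x‖ := by gcongr; exact abs_real_inner_le_norm x y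
    _ = ‖y‖ * ‖x‖ ^ 2 := by ring

theorem Complex.mul_add_eq_inner_div_norm_sq (a b lam : ℝ) {w : ℂ} (hw : w ≠ 0) :
    a * (lam * w.re / ‖w‖ ^ 2) + b = ⟪w, a * lam + b * w⟫ / ‖w‖ ^ 2 := by
  have hw₂ : ‖w‖ ^ 2 ≠ 0 := by positivity
  rw [Complex.inner, add_mul, mul_assoc (a : ℂ), mul_assoc (b : ℂ), Complex.mul_conj', Complex.add_re,
    ← Complex.ofReal_pow, Complex.re_ofReal_mul, Complex.re_ofReal_mul, Complex.re_ofReal_mul,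
    Complex.conj_re, Complex.ofReal_re]
  field_simp

/-- The length of the slope `q/p` on the cusp torus, `|p·λ + q·μ|`, is bounded below by
`|p·s + q|` where `s = λ·Re(μ)/|μ|²` is the natural slope, provided `|μ| ≥ 1`. -/
theorem slope_length_lower_bound (lam : ℝ) (μ : ℂ) (hμ : 1 ≤ ‖μ‖)
    (s : ℝ) (hs : s = lam * μ.re / (‖μ‖) ^ 2) :
    ∀ p q : ℤ, |(p : ℝ) * s + (q : ℝ)| ≤ ‖(p : ℂ) * (lam : ℂ) + (q : ℂ) * μ‖ := by
  intro p q
  have hμ₀ : μ ≠ 0 := norm_pos_iff.1 (one_pos.trans_le hμ)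
  rw [hs, Complex.mul_add_eq_inner_div_norm_sq p q lam hμ₀]
  push_cast
  calc _ ≤ ‖(p : ℂ) * lam + q * μ‖ / ‖μ‖ := abs_real_inner_div_norm_sq_le _ _
    _ ≤ ‖(p : ℂ) * lam + q * μ‖ := div_le_self (norm_nonneg _) hμ
end

section
/- Let λ be a real number and μ a complex number with |μ| ≥ 1, and set s = λ·Re(μ)/|μ|². If p and q are integers with p ≠ 0 and |p·λ + q·μ| ≤ 6, then |q/p + s| ≤ 6/|p|. -/
/-! Since `1 / μ = conj μ / ‖μ‖²`, the number `q + p s` is the real part of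
`(p λ + q μ) / μ`, whose modulus is at most `6 / ‖μ‖ ≤ 6`; dividing by `p` gives the bound. -/

namespace Complex

theorem re_ofReal_add_mul_div (r t : ℝ) {μ : ℂ} (hμ : μ ≠ 0) :
    (((r : ℂ) + t * μ) / μ).re = r * μ.re / ‖μ‖ ^ 2 + t := by
  rw [add_div, mul_div_cancel_right₀ _ hμ, add_re, div_re, ofReal_re, ofReal_im, ofReal_re,
    Complex.sq_norm]
  ring

theorem abs_mul_re_div_sq_norm_add_le (r t : ℝ) {μ : ℂ} (hμ : μ ≠ 0) :
    |r * μ.re / ‖μ‖ ^ 2 + t| ≤ ‖(r : ℂ) + t * μ‖ / ‖μ‖ := by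
  rw [← re_ofReal_add_mul_div r t hμ, ← norm_div]
  exact abs_re_le_norm _

end Complex

/-- If a slope `q/p` has length `|p·λ + q·μ| ≤ 6` on the cusp torus, then `q/p` lies within
`6/|p|` of minus the natural slope `s = λ·Re(μ)/|μ|²`. -/
theorem exceptional_slope_interval (lam : ℝ) (μ : ℂ) (hμ : 1 ≤ ‖μ‖)
    (s : ℝ) (hs : s = lam * μ.re / ‖μ‖ ^ 2)
    (p q : ℤ) (hp : p ≠ 0)
    (hlen : ‖(p : ℂ) * (lam : ℂ) + (q : ℂ) * μ‖ ≤ 6) :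
    |(q : ℝ) / (p : ℝ) + s| ≤ 6 / |(p : ℝ)| := by
  have hμ_ne : μ ≠ 0 := norm_pos_iff.mp (one_pos.trans_le hμ)
  have hp_ne : (p : ℝ) ≠ 0 := Int.cast_ne_zero.mpr hp
  have h_scaled : |(p * lam) * μ.re / ‖μ‖ ^ 2 + q| ≤ 6 := by
    have h := Complex.abs_mul_re_div_sq_norm_add_le (p * lam) q hμ_ne
    push_cast at h
    calc _ ≤ ‖(p : ℂ) * lam + q * μ‖ / ‖μ‖ := h
      _ ≤ 6 / 1 := by gcongr
      _ = 6 := div_one 6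
  have h_eq : (q : ℝ) / p + s = ((p * lam) * μ.re / ‖μ‖ ^ 2 + q) / p := by
    rw [hs]
    field_simp
    ring
  rw [h_eq, abs_div]
  gcongr
end

section
/- There exists a unique function κ from pairs of positive integers to the rational numbers satisfying, for all positive integers p and q: (1) if p > 2q and q is odd, then κ(p,q) = κ(p-2q,q) - 1; (2) if p > 2q and q is even, then κ(p,q) = κ(p-2q,q); (3) if p = 2q, then κ(p,q) = -1; (4) if q ≤ p < 2q and q is odd, then κ(p,q) = -κ(q,2q-p) - 1; (5) if q ≤ p < 2q and q is even, then κ(p,q) = -κ(q,2q-p) - 2; (6) if p < q, then κ(p,q) = κ(q,p). -/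
/-!
Every clause of the recursion strictly decreases the measure `2q + p`: the swap `(p,q) ↦ (q,p)`
for `p < q`, the translation `(p,q) ↦ (p - 2q, q)`, and the reflection `(p,q) ↦ (q, 2q - p)` for
`q < p < 2q`, since `2(2q - p) + q < 2q + p`. The only clause that does not decrease it is the
reflection at `p = q`, which reads `κ(q,q) = -κ(q,q) - c` and so forces `κ(q,q) = -c/2`.
Hence well-founded recursion on `2q + p` defines `κ`, and induction on it shows uniqueness.
-/

def translateCorrection (q : ℕ) : ℚ := if Odd q then 1 else 0

def reflectCorrection (q : ℕ) : ℚ := if Odd q then 1 else 2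

structure IsKappa (κ : ℕ+ → ℕ+ → ℚ) : Prop where
  translate (q r : ℕ+) : κ (r + 2 * q) q = κ r q - translateCorrection q
  two_mul (q : ℕ+) : κ (2 * q) q = -1
  reflect {p q r : ℕ+} : q ≤ p → p + r = 2 * q → κ p q = -κ q r - reflectCorrection q
  swap {p q : ℕ+} : p < q → κ p q = κ q p

theorem isKappa_iff (κ : ℕ+ → ℕ+ → ℚ) :
    IsKappa κ ↔
      (∀ q r : ℕ+, Odd (q : ℕ) → κ (r + 2 * q) q = κ r q - 1) ∧
      (∀ q r : ℕ+, Even (q : ℕ) → κ (r + 2 * q) q = κ r q) ∧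
      (∀ q : ℕ+, κ (2 * q) q = -1) ∧
      (∀ p q r : ℕ+, q ≤ p → p + r = 2 * q → Odd (q : ℕ) → κ p q = -κ q r - 1) ∧
      (∀ p q r : ℕ+, q ≤ p → p + r = 2 * q → Even (q : ℕ) → κ p q = -κ q r - 2) ∧
      (∀ p q : ℕ+, p < q → κ p q = κ q p) := by
  constructor
  · intro h
    refine ⟨fun q r ho => ?_, fun q r he => ?_, h.two_mul, fun p q r hqp hpr ho => ?_,
      fun p q r hqp hpr he => ?_, fun p q => h.swap⟩
    · simp [h.translate, translateCorrection, ho]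
    · simp [h.translate, translateCorrection, Nat.not_odd_iff_even.2 he]
    · simp [h.reflect hqp hpr, reflectCorrection, ho]
    · simp [h.reflect hqp hpr, reflectCorrection, Nat.not_odd_iff_even.2 he]
  · rintro ⟨h_odd, h_even, h_two_mul, h_refl_odd, h_refl_even, h_swap⟩
    refine ⟨fun q r => ?_, h_two_mul, fun {p q r} hqp hpr => ?_, fun {p q} => h_swap p q⟩
    · rcases Nat.even_or_odd q with he | ho
      · simp [h_even q r he, translateCorrection, Nat.not_odd_iff_even.2 he]
      · simp [h_odd q r ho, translateCorrection, ho]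
    · rcases Nat.even_or_odd q with he | ho
      · simp [h_refl_even p q r hqp hpr he, reflectCorrection, Nat.not_odd_iff_even.2 he]
      · simp [h_refl_odd p q r hqp hpr ho, reflectCorrection, ho]

namespace IsKappa

variable {κ κ₁ κ₂ : ℕ+ → ℕ+ → ℚ}

theorem apply_self (h : IsKappa κ) (q : ℕ+) : κ q q = -reflectCorrection q / 2 := by
  have := h.reflect le_rfl (show q + q = 2 * q from PNat.eq (by push_cast; ring))
  linarith

theorem apply_eq (h₁ : IsKappa κ₁) (h₂ : IsKappa κ₂) (p q : ℕ+) : κ₁ p q = κ₂ p q := by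
  rcases lt_trichotomy p q with hpq | rfl | hqp
  · rw [h₁.swap hpq, h₂.swap hpq, h₁.apply_eq h₂ q p]
  · rw [h₁.apply_self, h₂.apply_self]
  rcases lt_trichotomy p (2 * q) with hp | rfl | hp
  · obtain ⟨r, hpr⟩ : ∃ r, p + r = 2 * q := ⟨_, PNat.add_sub_of_lt hp⟩
    rw [h₁.reflect hqp.le hpr, h₂.reflect hqp.le hpr, h₁.apply_eq h₂ q r]
  · rw [h₁.two_mul, h₂.two_mul]
  · obtain ⟨r, rfl⟩ : ∃ r, p = r + 2 * q := ⟨_, (PNat.sub_add_of_lt hp).symm⟩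
    rw [h₁.translate, h₂.translate, h₁.apply_eq h₂ r q]
termination_by 2 * (q : ℕ) + p
decreasing_by
  all_goals
    simp only [← PNat.coe_inj, ← PNat.coe_lt_coe, PNat.add_coe, PNat.mul_coe,
      PNat.val_ofNat] at *
    have := q.pos
    omega

end IsKappa

def kappaNat (p q : ℕ) : ℚ :=
  if q = 0 then 0
  else if p < q then kappaNat q p
  else if p = q then -reflectCorrection q / 2
  else if p < 2 * q then -kappaNat q (2 * q - p) - reflectCorrection q
  else if p = 2 * q then -1
  else kappaNat (p - 2 * q) q - translateCorrection q
termination_by 2 * q + p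
decreasing_by all_goals omega

theorem kappaNat_of_lt {p q : ℕ} (h : p < q) : kappaNat p q = kappaNat q p := by
  rw [kappaNat]; simp [h, Nat.ne_zero_of_lt h]

theorem kappaNat_self {q : ℕ} (hq : q ≠ 0) : kappaNat q q = -reflectCorrection q / 2 := by
  rw [kappaNat]; simp [hq]

theorem kappaNat_of_lt_of_lt_two_mul {p q : ℕ} (hqp : q < p) (hp : p < 2 * q) :
    kappaNat p q = -kappaNat q (2 * q - p) - reflectCorrection q := by
  rw [kappaNat]; simp [hp, hqp.ne', hqp.not_gt, show q ≠ 0 by omega]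

theorem kappaNat_two_mul {q : ℕ} (hq : q ≠ 0) : kappaNat (2 * q) q = -1 := by
  rw [kappaNat, if_neg hq, if_neg (by omega), if_neg (by omega), if_neg (by omega), if_pos rfl]

theorem kappaNat_of_two_mul_lt {p q : ℕ} (hq : q ≠ 0) (hp : 2 * q < p) :
    kappaNat p q = kappaNat (p - 2 * q) q - translateCorrection q := by
  rw [kappaNat, if_neg hq, if_neg (by omega), if_neg (by omega), if_neg hp.not_gt, if_neg hp.ne']

def kappa (p q : ℕ+) : ℚ := kappaNat p q

theorem isKappa_kappa : IsKappa kappa where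
  translate q r := by
    simp only [kappa, PNat.add_coe, PNat.mul_coe, PNat.val_ofNat]
    rw [kappaNat_of_two_mul_lt q.ne_zero (lt_add_of_pos_left _ r.pos), Nat.add_sub_cancel]
  two_mul q := by simpa [kappa] using kappaNat_two_mul q.ne_zero
  reflect {p q r} hqp hpr := by
    have hpr' : (p : ℕ) + r = 2 * q := by simpa [← PNat.coe_inj] using hpr
    obtain hpq | hqp := ((PNat.coe_le_coe _ _).2 hqp).eq_or_lt
    · have hrq : (r : ℕ) = q := by omega
      simp only [kappa, ← hpq, hrq, kappaNat_self q.ne_zero]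
      ring
    · have := r.pos
      rw [kappa, kappaNat_of_lt_of_lt_two_mul hqp (by omega), show 2 * (q : ℕ) - p = r by omega,
        kappa]
  swap h := kappaNat_of_lt h

/-- There is a unique function `κ` on pairs of positive integers, with rational values,
satisfying the recursion defining the signature correction term:
(1) if `p > 2q` and `q` is odd, then `κ(p,q) = κ(p-2q,q) - 1`
    (encoded as `κ(r+2q,q) = κ(r,q) - 1` for `r ≥ 1`);
(2) if `p > 2q` and `q` is even, then `κ(p,q) = κ(p-2q,q)`;
(3) if `p = 2q`, then `κ(p,q) = -1`;
(4) if `q ≤ p < 2q` and `q` is odd, then `κ(p,q) = -κ(q,2q-p) - 1`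
    (encoded via `p + r = 2q` with `r ≥ 1`, so `r = 2q - p`);
(5) if `q ≤ p < 2q` and `q` is even, then `κ(p,q) = -κ(q,2q-p) - 2`;
(6) if `p < q`, then `κ(p,q) = κ(q,p)`. -/
theorem kappa_exists_unique :
    ∃! κ : ℕ+ → ℕ+ → ℚ,
      (∀ q r : ℕ+, Odd (q : ℕ) → κ (r + 2 * q) q = κ r q - 1) ∧
      (∀ q r : ℕ+, Even (q : ℕ) → κ (r + 2 * q) q = κ r q) ∧
      (∀ q : ℕ+, κ (2 * q) q = -1) ∧
      (∀ p q r : ℕ+, q ≤ p → p + r = 2 * q → Odd (q : ℕ) → κ p q = -κ q r - 1) ∧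
      (∀ p q r : ℕ+, q ≤ p → p + r = 2 * q → Even (q : ℕ) → κ p q = -κ q r - 2) ∧
      (∀ p q : ℕ+, p < q → κ p q = κ q p) := by
  simp_rw [← isKappa_iff]
  exact ⟨kappa, isKappa_kappa, fun κ h => funext₂ (h.apply_eq isKappa_kappa)⟩
end

section
/- Let Λ be a ℤ-lattice of full rank in ℂ, let L be the minimal norm of a nonzero element of Λ, and let A be the covolume of Λ. Then every nonzero class in the quotient group Λ/2Λ has a representative v ∈ Λ with ‖v‖ ≤ 3L/2 + A/L. -/
/-!
Let `e` be a shortest nonzero vector of `Λ`, so `‖e‖ = L`. It is primitive (a proper divisor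
of it would be shorter), hence extends to a `ℤ`-basis `(e, e')` of `Λ`, and then
`|Im (conj e * e')| = A`. Write `w = a e + c e'`; replacing `c` by `c % 2 ∈ {0, 1}` and `a` by
`a + 2i` for a suitable `i` gives `v ≡ w mod 2Λ` with `|Re (conj e * v)| ≤ L²` and
`|Im (conj e * v)| ≤ A`, so `L ‖v‖ = ‖conj e * v‖ ≤ L² + A`.
-/

open Complex ComplexConjugate MeasureTheory

lemma Module.Basis.exists_zsmul_add_zsmul {E : Type*} [AddCommGroup E] {Λ : Submodule ℤ E}
    (b : Module.Basis (Fin 2) ℤ Λ) {x : E} (hx : x ∈ Λ) :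
    ∃ m n : ℤ, x = m • (b 0 : E) + n • (b 1 : E) :=
  ⟨b.repr ⟨x, hx⟩ 0, b.repr ⟨x, hx⟩ 1, by
    have h := congrArg Subtype.val (b.sum_repr ⟨x, hx⟩)
    rw [Fin.sum_univ_two] at h
    exact h.symm⟩

lemma isCoprime_of_isLeast_norm {E : Type*} [NormedAddCommGroup E] [NormedSpace ℝ E]
    {Λ : Submodule ℤ E} {L : ℝ} (hL : IsLeast {r : ℝ | ∃ v ∈ Λ, v ≠ 0 ∧ ‖v‖ = r} L)
    {x y : E} (hx : x ∈ Λ) (hy : y ∈ Λ) {p q : ℤ} (hne : p • x + q • y ≠ 0)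
    (hnorm : ‖p • x + q • y‖ = L) : IsCoprime p q := by
  have hpq : 0 < Int.gcd p q := Int.gcd_pos_iff.mpr (by contrapose! hne; simp [hne])
  obtain ⟨g, p', q', -, hcop, rfl, rfl⟩ := Int.exists_gcd_one' hpq
  set u := p' • x + q' • y
  have hu : u ∈ Λ := Λ.add_mem (Λ.smul_mem p' hx) (Λ.smul_mem q' hy)
  have hgu : (p' * g) • x + (q' * g) • y = (g : ℤ) • u := by
    simp only [u, smul_add, smul_smul, mul_comm]
  rw [hgu] at hne hnorm
  have hu0 : u ≠ 0 := by intro h; simp [h] at hne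
  have hLu : L ≤ ‖u‖ := hL.2 ⟨u, hu, hu0, rfl⟩
  have hg : g = 1 := by
    rw [norm_zsmul ℝ, Int.cast_natCast, Real.norm_natCast] at hnorm
    have h1 : (g : ℝ) ≤ 1 := by nlinarith [norm_pos_iff.mpr hu0]
    have h0 : g ≠ 0 := by rintro rfl; simp at hne
    have : g ≤ 1 := by exact_mod_cast h1
    omega
  subst hg
  simpa [Int.isCoprime_iff_gcd_eq_one] using hcop

lemma im_conj_mul_zsmul_add_zsmul (x y : ℂ) (p q r s : ℤ) :
    (conj (p • x + q • y) * (r • x + s • y)).im = (p * s - q * r) * (conj x * y).im := by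
  simp only [zsmul_eq_mul, map_add, map_mul, mul_im, mul_re, add_re, add_im,
    intCast_re, intCast_im, conj_re, conj_im]
  ring

lemma ZLattice.covolume_eq_abs_im_conj_mul (Λ : Submodule ℤ ℂ) [DiscreteTopology Λ]
    [IsZLattice ℝ Λ] (b : Module.Basis (Fin 2) ℤ Λ) :
    ZLattice.covolume Λ = |(conj (b 0 : ℂ) * b 1).im| := by
  let e : (Fin 2 → ℝ) ≃L[ℝ] ℂ := basisOneI.equivFun.toContinuousLinearEquiv.symm
  rw [← ZLattice.covolume_comap Λ volume volume (e := e) volume_preserving_equiv_pi.symm,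
    ZLattice.covolume_eq_det _ (b.ofZLatticeComap ℝ Λ e.toLinearEquiv), Matrix.det_fin_two]
  simp only [Function.comp_apply, Matrix.of_apply, Module.Basis.ofZLatticeComap_apply]
  simp [e, mul_im, mul_comm, sub_eq_add_neg]

lemma exists_basis_partner_of_isLeast_norm (Λ : Submodule ℤ ℂ) [DiscreteTopology Λ]
    [IsZLattice ℝ Λ] {L : ℝ} (hL : IsLeast {r : ℝ | ∃ v ∈ Λ, v ≠ 0 ∧ ‖v‖ = r} L)
    {e : ℂ} (he : e ∈ Λ) (he0 : e ≠ 0) (heL : ‖e‖ = L) :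
    ∃ e' ∈ Λ, |(conj e * e').im| = ZLattice.covolume Λ ∧
      ∀ w ∈ Λ, ∃ a c : ℤ, w = a • e + c • e' := by
  have hrank : Module.finrank ℤ Λ = 2 := by
    rw [ZLattice.rank ℝ Λ, Complex.finrank_real_complex]
  let b : Module.Basis (Fin 2) ℤ Λ := (Module.finBasis ℤ Λ).reindex (finCongr hrank)
  obtain ⟨p, q, rfl⟩ := b.exists_zsmul_add_zsmul he
  obtain ⟨s, r, hsr⟩ := isCoprime_of_isLeast_norm hL (b 0).2 (b 1).2 he0 heL
  refine ⟨(-r) • (b 0 : ℂ) + s • (b 1 : ℂ),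
    Λ.add_mem (Λ.smul_mem _ (b 0).2) (Λ.smul_mem _ (b 1).2), ?_, fun w hw ↦ ?_⟩
  · rw [im_conj_mul_zsmul_add_zsmul, ZLattice.covolume_eq_abs_im_conj_mul Λ b]
    have hsrR : (s : ℝ) * p + r * q = 1 := by exact_mod_cast hsr
    have hdet : (p : ℝ) * s - q * -r = 1 := by linear_combination hsrR
    rw [Int.cast_neg, hdet, one_mul]
  · obtain ⟨m, n, rfl⟩ := b.exists_zsmul_add_zsmul hw
    refine ⟨s * m + r * n, -q * m + p * n, ?_⟩
    have hsrC : (s : ℂ) * p + r * q = 1 := by exact_mod_cast hsr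
    simp only [zsmul_eq_mul]
    push_cast
    linear_combination (-(m : ℂ) * b 0 - n * b 1) * hsrC

lemma exists_int_abs_add_int_mul_le (x : ℝ) {c : ℝ} (hc : 0 < c) :
    ∃ i : ℤ, |x + i * c| ≤ c / 2 := by
  refine ⟨-round (x / c), ?_⟩
  have h : x + ((-round (x / c) : ℤ) : ℝ) * c = (x / c - round (x / c)) * c := by
    push_cast; field_simp; ring
  rw [h, abs_mul, abs_of_pos hc]
  linarith [mul_le_mul_of_nonneg_right (abs_sub_round (x / c)) hc.le]

lemma exists_norm_mul_norm_add_two_mul_zsmul_le (e e' : ℂ) (he : e ≠ 0) (a c : ℤ) :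
    ∃ i j : ℤ, ‖e‖ * ‖(a + 2 * i) • e + (c + 2 * j) • e'‖ ≤ ‖e‖ ^ 2 + |(conj e * e').im| := by
  set c' := c % 2
  have hc' : c + 2 * -(c / 2) = c' := by simp only [c', Int.emod_def]; ring
  have hc'1 : |(c' : ℝ)| ≤ 1 := by
    rcases Int.emod_two_eq_zero_or_one c with h | h <;> simp [c', h]
  obtain ⟨i, hi⟩ := exists_int_abs_add_int_mul_le (conj e * (a • e + c' • e')).re
    (by positivity : (0 : ℝ) < 2 * ‖e‖ ^ 2)
  refine ⟨i, -(c / 2), ?_⟩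
  rw [hc']
  set v := (a + 2 * i) • e + c' • e'
  have hv : conj e * v = conj e * (a • e + c' • e') + ((2 * i * ‖e‖ ^ 2 : ℝ) : ℂ) := by
    simp only [v, zsmul_eq_mul]
    push_cast
    rw [← conj_mul']
    ring
  have hre : (conj e * v).re = (conj e * (a • e + c' • e')).re + i * (2 * ‖e‖ ^ 2) := by
    rw [hv, add_re, ofReal_re]
    ring
  have him : (conj e * v).im = c' * (conj e * e').im := by
    rw [hv, add_im, ofReal_im, add_zero]
    simp [mul_add, zsmul_eq_mul, mul_left_comm _ (a : ℂ), mul_left_comm _ (c' : ℂ), conj_mul',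
      ← ofReal_pow]
  calc ‖e‖ * ‖v‖ = ‖conj e * v‖ := by rw [norm_mul, RCLike.norm_conj]
    _ ≤ |(conj e * v).re| + |(conj e * v).im| := norm_le_abs_re_add_abs_im _
    _ ≤ ‖e‖ ^ 2 + |(conj e * e').im| := by
      rw [hre, him, abs_mul]
      gcongr
      · linarith
      · exact mul_le_of_le_one_left (abs_nonneg _) hc'1

/-- For a full-rank `ℤ`-lattice `Λ` in `ℂ` with shortest nonzero vector of norm `L` and
covolume `A`, every nonzero class of `Λ/2Λ` has a representative of norm at most
`3L/2 + A/L`: for every `w ∈ Λ` not of the form `2u` with `u ∈ Λ`, there exists `v ∈ Λ`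
congruent to `w` modulo `2Λ` with `‖v‖ ≤ 3L/2 + A/L`. -/
theorem short_representative_mod_two (Λ : Submodule ℤ ℂ) [DiscreteTopology Λ] [IsZLattice ℝ Λ]
    (L : ℝ) (hL : IsLeast {r : ℝ | ∃ v ∈ Λ, v ≠ 0 ∧ ‖v‖ = r} L)
    (A : ℝ) (hA : A = ZLattice.covolume Λ) :
    ∀ w ∈ Λ, ¬ (∃ u ∈ Λ, w = 2 * u) →
      ∃ v ∈ Λ, (∃ u ∈ Λ, v - w = 2 * u) ∧ ‖v‖ ≤ 3 * L / 2 + A / L := by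
  intro w hw _
  obtain ⟨e, he, he0, heL⟩ := hL.1
  have hLpos : 0 < L := heL ▸ norm_pos_iff.mpr he0
  obtain ⟨e', he', harea, hspan⟩ := exists_basis_partner_of_isLeast_norm Λ hL he he0 heL
  obtain ⟨a, c, rfl⟩ := hspan w hw
  obtain ⟨i, j, hshort⟩ := exists_norm_mul_norm_add_two_mul_zsmul_le e e' he0 a c
  rw [heL, harea, ← hA] at hshort
  have hmem : ∀ m n : ℤ, m • e + n • e' ∈ Λ :=
    fun m n ↦ Λ.add_mem (Λ.smul_mem m he) (Λ.smul_mem n he')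
  refine ⟨_, hmem (a + 2 * i) (c + 2 * j), ⟨i • e + j • e', hmem i j, ?_⟩, ?_⟩
  · simp only [zsmul_eq_mul]
    push_cast
    ring
  · calc _ ≤ (L ^ 2 + A) / L := (le_div_iff₀' hLpos).mpr hshort
      _ = L + A / L := by field_simp
      _ ≤ 3 * L / 2 + A / L := by linarith
end

section
/- Let λ be a positive real number and μ a complex number with Im(μ) > 0, 1 ≤ |μ| ≤ 6, and λ·Im(μ) ≥ 3.35. Set s = λ·Re(μ)/|μ|², and let n be a real number with |n - s| ≤ 1. Then λ·Im(μ) ≥ 0.55·|λ - n·μ|. -/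
/-!
Writing `λ = sμ + (λ - sμ)`, the vector `λ - sμ` is orthogonal to `μ` and has length
`λ·Im(μ)/|μ|`, so Pythagoras gives `|λ - nμ|² = (n - s)²|μ|² + (λ·Im(μ))²/|μ|²`.
With `|n - s| ≤ 1` the right side is at most `m + A²/m` for `m = |μ|² ∈ [1, 36]` and
`A = λ·Im(μ) ≥ 3.35`; this is convex in `m`, so checking the endpoints `m = 1` and `m = 36`
gives `0.55²(m + A²/m) ≤ A²`.
-/

theorem Complex.norm_ofReal_sub_mul_sq (lam n : ℝ) {μ : ℂ} (hμ : μ ≠ 0) :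
    ‖(lam : ℂ) - n * μ‖ ^ 2 =
      (n - lam * μ.re / ‖μ‖ ^ 2) ^ 2 * ‖μ‖ ^ 2 + (lam * μ.im) ^ 2 / ‖μ‖ ^ 2 := by
  have hm : ‖μ‖ ^ 2 = μ.re ^ 2 + μ.im ^ 2 := by
    rw [Complex.sq_norm, Complex.normSq_apply]; ring
  have hm0 : ‖μ‖ ^ 2 ≠ 0 := by positivity
  rw [Complex.sq_norm, Complex.normSq_apply]
  field_simp
  simp only [Complex.sub_re, Complex.sub_im, Complex.mul_re, Complex.mul_im, Complex.ofReal_re,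
    Complex.ofReal_im]
  rw [hm]
  ring

theorem mul_add_sq_div_le_sq_of_le_of_le {m A : ℝ} (hm1 : 1 ≤ m) (hm36 : m ≤ 36)
    (hA : 3.35 ≤ A) :
    0.55 ^ 2 * (m + A ^ 2 / m) ≤ A ^ 2 := by
  have hA2 : 11.2225 ≤ A ^ 2 := by nlinarith
  rw [← mul_le_mul_iff_left₀ (by linarith : 0 < m), mul_assoc, add_mul,
    div_mul_cancel₀ _ (by positivity)]
  nlinarith [mul_nonneg (sub_nonneg.mpr hA2) (by linarith : (0 : ℝ) ≤ m - 0.3025),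
    mul_nonneg (sub_nonneg.mpr hm1) (sub_nonneg.mpr hm36)]

theorem cusp_height_bound_general (lam : ℝ) (μ : ℂ)
    (hμ1 : 1 ≤ ‖μ‖) (hμ6 : ‖μ‖ ≤ 6)
    (harea : lam * μ.im ≥ 3.35)
    (s : ℝ) (hs : s = lam * μ.re / ‖μ‖ ^ 2)
    (n : ℝ) (hn : |n - s| ≤ 1) :
    lam * μ.im ≥ 0.55 * ‖(lam : ℂ) - (n : ℂ) * μ‖ := by
  have hμ : μ ≠ 0 := norm_pos_iff.mp (by linarith)
  have hm1 : 1 ≤ ‖μ‖ ^ 2 := one_le_pow₀ hμ1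
  have hm36 : ‖μ‖ ^ 2 ≤ 36 := by nlinarith [norm_nonneg μ]
  have hslope : (n - s) ^ 2 * ‖μ‖ ^ 2 ≤ ‖μ‖ ^ 2 :=
    mul_le_of_le_one_left (sq_nonneg _) (sq_le_one_iff_abs_le_one _ |>.mpr hn)
  have hsq : (0.55 * ‖(lam : ℂ) - n * μ‖) ^ 2 ≤ (lam * μ.im) ^ 2 := calc
    _ = 0.55 ^ 2 * ((n - s) ^ 2 * ‖μ‖ ^ 2 + (lam * μ.im) ^ 2 / ‖μ‖ ^ 2) := by
      rw [mul_pow, Complex.norm_ofReal_sub_mul_sq lam n hμ, hs]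
    _ ≤ 0.55 ^ 2 * (‖μ‖ ^ 2 + (lam * μ.im) ^ 2 / ‖μ‖ ^ 2) := by gcongr
    _ ≤ (lam * μ.im) ^ 2 := mul_add_sq_div_le_sq_of_le_of_le hm1 hm36 harea
  exact (pow_le_pow_iff_left₀ (by positivity) (by linarith) two_ne_zero).mp hsq

/-- Let `λ > 0` be the longitudinal translation and `μ` the meridional translation of the cusp
torus, with `Im(μ) > 0`, `1 ≤ |μ| ≤ 6`, and area `λ·Im(μ) ≥ 3.35`. If `n` is within `1` of the
natural slope `s = λ·Re(μ)/|μ|²`, then `λ·Im(μ) ≥ 0.55·|λ - n·μ|`. -/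
theorem cusp_height_bound (lam : ℝ) (hlam : 0 < lam) (μ : ℂ) (hμim : 0 < μ.im)
    (hμ1 : 1 ≤ ‖μ‖) (hμ6 : ‖μ‖ ≤ 6)
    (harea : lam * μ.im ≥ 3.35)
    (s : ℝ) (hs : s = lam * μ.re / ‖μ‖ ^ 2)
    (n : ℝ) (hn : |n - s| ≤ 1) :
    lam * μ.im ≥ 0.55 * ‖(lam : ℂ) - (n : ℂ) * μ‖ :=
  cusp_height_bound_general lam μ hμ1 hμ6 harea s hs n hn
end
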